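/- Let a, b > 0, 0 < c < 1 with 2c + a(1−c) ≠ 1, and let f : [0,∞) → [0,∞) be differentiable satisfying f'(t) ≤ (a/(t+1)) f(t) + (b/(t+1)^{2c}) f(t)^c for all t ≥ 0. Then f(t)^{1−c} ≤ f(0)^{1−c} (t+1)^{a(1−c)} + (b(1−c)/(1 − (2c + a(1−c)))) · ((t+1)^{1−2c} − (t+1)^{a(1−c)}) for all t ≥ 0. -/
import Mathlib

open Real Filter

private lemma gronwall_aux (a b c : ℝ) (ha : 0 < a) (hb : 0 < b)
    (hc0 : 0 < c) (hc1 : c < 1) (hne : 2 * c + a * (1 - c) ≠ 1)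
    (f f' : ℝ → ℝ) (hf0 : ∀ t, 0 ≤ t → 0 ≤ f t)
    (hderiv : ∀ t, 0 ≤ t → HasDerivAt f (f' t) t)
    (hineq : ∀ t, 0 ≤ t → f' t ≤ a / (t + 1) * f t + b / (t + 1) ^ (2 * c) * f t ^ c)
    (ε : ℝ) (hε : 0 < ε) :
    ∀ t, 0 ≤ t →
      (f t + ε) ^ (1 - c) ≤ (f 0 + ε) ^ (1 - c) * (t + 1) ^ (a * (1 - c))
        + b * (1 - c) / (1 - (2 * c + a * (1 - c)))
          * ((t + 1) ^ (1 - 2 * c) - (t + 1) ^ (a * (1 - c))) := by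
  set A := a * (1 - c) with hA
  set B := 1 - 2 * c - A with hB
  have hc1' : (0:ℝ) < 1 - c := by linarith
  have hA0 : 0 < A := mul_pos ha hc1'
  have hB0 : B ≠ 0 := by
    intro h
    apply hne
    rw [hB] at h; linarith
  set K := b * (1 - c) / (1 - (2 * c + A)) with hK
  have hKB : K * B = b * (1 - c) := by
    rw [hK]
    have : 1 - (2 * c + A) = B := by rw [hB]; ring
    rw [this]
    field_simp
  set H : ℝ → ℝ := fun s => (f s + ε) ^ (1 - c) * (s + 1) ^ (-A) - K * ((s + 1) ^ B - 1)
    with hHdef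
  -- derivative of H
  have hHderiv : ∀ s, 0 ≤ s → HasDerivAt H
      ((f' s * (1 - c) * (f s + ε) ^ (1 - c - 1)) * (s + 1) ^ (-A)
        + (f s + ε) ^ (1 - c) * (1 * (-A) * (s + 1) ^ (-A - 1))
        - K * (1 * B * (s + 1) ^ (B - 1))) s := by
    intro s hs
    have hfs : 0 < f s + ε := add_pos_of_nonneg_of_pos (hf0 s hs) hε
    have hs1 : (0:ℝ) < s + 1 := by linarith
    have hG : HasDerivAt (fun s => (f s + ε) ^ (1 - c))
        (f' s * (1 - c) * (f s + ε) ^ (1 - c - 1)) s :=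
      ((hderiv s hs).add_const ε).rpow_const (Or.inl hfs.ne')
    have hM : HasDerivAt (fun s : ℝ => (s + 1) ^ (-A)) (1 * (-A) * (s + 1) ^ (-A - 1)) s :=
      ((hasDerivAt_id s).add_const 1).rpow_const (Or.inl hs1.ne')
    have hN : HasDerivAt (fun s : ℝ => (s + 1) ^ B) (1 * B * (s + 1) ^ (B - 1)) s :=
      ((hasDerivAt_id s).add_const 1).rpow_const (Or.inl hs1.ne')
    exact (hG.mul hM).sub (((hN.sub_const 1)).const_mul K)
  -- derivative is nonpositive
  have hDneg : ∀ s, 0 ≤ s →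
      ((f' s * (1 - c) * (f s + ε) ^ (1 - c - 1)) * (s + 1) ^ (-A)
        + (f s + ε) ^ (1 - c) * (1 * (-A) * (s + 1) ^ (-A - 1))
        - K * (1 * B * (s + 1) ^ (B - 1))) ≤ 0 := by
    intro s hs
    have hfs : 0 < f s + ε := add_pos_of_nonneg_of_pos (hf0 s hs) hε
    have hs1 : (0:ℝ) < s + 1 := by linarith
    set F := f s + ε with hF
    set e := s + 1 with he
    have E3 : F ^ (1 - c - 1) = F ^ (-c) := by norm_num
    have E1 : e ^ (-A - 1) = e ^ (-A) / e := Real.rpow_sub_one hs1.ne' _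
    have E2 : e ^ (B - 1) = e ^ (-A) / e ^ (2 * c) := by
      have h1 : B - 1 = -A - 2 * c := by rw [hB]; ring
      rw [h1, Real.rpow_sub hs1]
    have E4 : F ^ (-c) * F = F ^ (1 - c) := by
      rw [show (1 - c : ℝ) = -c + 1 by ring, Real.rpow_add hfs, Real.rpow_one]
    have E5 : F ^ (-c) * F ^ c = 1 := by
      rw [← Real.rpow_add hfs]; norm_num
    -- key inequality
    have h1 : f' s ≤ a / e * F + b / e ^ (2 * c) * F ^ c := by
      have := hineq s hs
      have hmono : f s ^ c ≤ F ^ c :=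
        Real.rpow_le_rpow (hf0 s hs) (by rw [hF]; linarith) hc0.le
      have h2 : a / e * f s ≤ a / e * F := by
        apply mul_le_mul_of_nonneg_left (by rw [hF]; linarith)
        positivity
      have h3 : b / e ^ (2 * c) * f s ^ c ≤ b / e ^ (2 * c) * F ^ c := by
        apply mul_le_mul_of_nonneg_left hmono
        positivity
      calc f' s ≤ a / (s + 1) * f s + b / (s + 1) ^ (2 * c) * f s ^ c := this
        _ ≤ a / e * F + b / e ^ (2 * c) * F ^ c := by rw [← he]; linarith
    have hm : 0 < (1 - c) * F ^ (-c) * e ^ (-A) := by positivity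
    have step : (1 - c) * F ^ (-c) * e ^ (-A) * f' s
        ≤ (1 - c) * F ^ (-c) * e ^ (-A) * (a / e * F + b / e ^ (2 * c) * F ^ c) :=
      mul_le_mul_of_nonneg_left h1 hm.le
    have expand : (1 - c) * F ^ (-c) * e ^ (-A) * (a / e * F + b / e ^ (2 * c) * F ^ c)
        = A * F ^ (1 - c) * (e ^ (-A) / e) + b * (1 - c) * (e ^ (-A) / e ^ (2 * c)) := by
      have : (1 - c) * F ^ (-c) * e ^ (-A) * (a / e * F + b / e ^ (2 * c) * F ^ c)
          = (1 - c) * a * (F ^ (-c) * F) * (e ^ (-A) / e)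
            + (1 - c) * b * (F ^ (-c) * F ^ c) * (e ^ (-A) / e ^ (2 * c)) := by
        ring
      rw [this, E4, E5, hA]
      ring
    rw [E1, E2, E3]
    have hKB' : K * (1 * B * (e ^ (-A) / e ^ (2 * c)))
        = b * (1 - c) * (e ^ (-A) / e ^ (2 * c)) := by
      rw [show K * (1 * B * (e ^ (-A) / e ^ (2 * c))) = (K * B) * (e ^ (-A) / e ^ (2 * c)) by ring,
        hKB]
    nlinarith [step, expand, hKB']
  -- H is antitone on [0, ∞)
  have hanti : AntitoneOn H (Set.Ici 0) := by
    apply antitoneOn_of_deriv_nonpos (convex_Ici 0)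
    · intro s hs
      exact (hHderiv s hs).continuousAt.continuousWithinAt
    · intro s hs
      rw [interior_Ici] at hs
      exact ((hHderiv s (le_of_lt hs)).differentiableAt).differentiableWithinAt
    · intro s hs
      rw [interior_Ici] at hs
      rw [(hHderiv s (le_of_lt hs)).deriv]
      exact hDneg s (le_of_lt hs)
  intro t ht
  have hH0 : H 0 = (f 0 + ε) ^ (1 - c) := by
    simp [hHdef]
  have hle : H t ≤ (f 0 + ε) ^ (1 - c) := by
    rw [← hH0]
    exact hanti (Set.self_mem_Ici) ht ht
  have hs1 : (0:ℝ) < t + 1 := by linarith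
  have hP : (0:ℝ) < (t + 1) ^ A := Real.rpow_pos_of_pos hs1 A
  have hinv : (t + 1) ^ (-A) * (t + 1) ^ A = 1 := by
    rw [← Real.rpow_add hs1]; norm_num
  have hBA : (t + 1) ^ B * (t + 1) ^ A = (t + 1) ^ (1 - 2 * c) := by
    rw [← Real.rpow_add hs1]
    congr 1
    rw [hB]; ring
  have hmul : H t * (t + 1) ^ A ≤ (f 0 + ε) ^ (1 - c) * (t + 1) ^ A :=
    mul_le_mul_of_nonneg_right hle hP.le
  have hexp : H t * (t + 1) ^ A
      = (f t + ε) ^ (1 - c) - K * ((t + 1) ^ (1 - 2 * c) - (t + 1) ^ A) := by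
    rw [hHdef]
    simp only []
    rw [show ((f t + ε) ^ (1 - c) * (t + 1) ^ (-A) - K * ((t + 1) ^ B - 1)) * (t + 1) ^ A
        = (f t + ε) ^ (1 - c) * ((t + 1) ^ (-A) * (t + 1) ^ A)
          - K * ((t + 1) ^ B * (t + 1) ^ A - (t + 1) ^ A) by ring, hinv, hBA]
    ring
  have hfinal : (f t + ε) ^ (1 - c)
      ≤ (f 0 + ε) ^ (1 - c) * (t + 1) ^ A + K * ((t + 1) ^ (1 - 2 * c) - (t + 1) ^ A) := by
    rw [hexp] at hmul; linarith
  exact hfinal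

/-- Grönwall-type differential inequality, non-critical case `2c + a(1-c) ≠ 1`. -/
theorem gronwall_type_noncritical (a b c : ℝ) (ha : 0 < a) (hb : 0 < b)
    (hc0 : 0 < c) (hc1 : c < 1) (hne : 2 * c + a * (1 - c) ≠ 1)
    (f f' : ℝ → ℝ) (hf0 : ∀ t, 0 ≤ t → 0 ≤ f t)
    (hderiv : ∀ t, 0 ≤ t → HasDerivAt f (f' t) t)
    (hineq : ∀ t, 0 ≤ t → f' t ≤ a / (t + 1) * f t + b / (t + 1) ^ (2 * c) * f t ^ c) :
    ∀ t, 0 ≤ t →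
      f t ^ (1 - c) ≤ f 0 ^ (1 - c) * (t + 1) ^ (a * (1 - c))
        + b * (1 - c) / (1 - (2 * c + a * (1 - c)))
          * ((t + 1) ^ (1 - 2 * c) - (t + 1) ^ (a * (1 - c))) := by
  intro t ht
  have hc1' : (0:ℝ) < 1 - c := by linarith
  have key : ∀ ε : ℝ, 0 < ε →
      f t ^ (1 - c) ≤ (f 0 + ε) ^ (1 - c) * (t + 1) ^ (a * (1 - c))
        + b * (1 - c) / (1 - (2 * c + a * (1 - c)))
          * ((t + 1) ^ (1 - 2 * c) - (t + 1) ^ (a * (1 - c))) := by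
    intro ε hε
    have h1 : f t ^ (1 - c) ≤ (f t + ε) ^ (1 - c) :=
      Real.rpow_le_rpow (hf0 t ht) (by linarith) hc1'.le
    exact h1.trans (gronwall_aux a b c ha hb hc0 hc1 hne f f' hf0 hderiv hineq ε hε t ht)
  -- take the limit ε → 0⁺
  have hcont : Filter.Tendsto
      (fun ε : ℝ => (f 0 + ε) ^ (1 - c) * (t + 1) ^ (a * (1 - c))
        + b * (1 - c) / (1 - (2 * c + a * (1 - c)))
          * ((t + 1) ^ (1 - 2 * c) - (t + 1) ^ (a * (1 - c))))
      (nhdsWithin 0 (Set.Ioi 0))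
      (nhds (f 0 ^ (1 - c) * (t + 1) ^ (a * (1 - c))
        + b * (1 - c) / (1 - (2 * c + a * (1 - c)))
          * ((t + 1) ^ (1 - 2 * c) - (t + 1) ^ (a * (1 - c))))) := by
    have h2 : ContinuousAt (fun ε : ℝ => (f 0 + ε) ^ (1 - c)) 0 := by
      have hadd : ContinuousAt (fun ε : ℝ => f 0 + ε) 0 := by fun_prop
      have hr : ContinuousAt (fun x : ℝ => x ^ (1 - c)) (f 0 + 0) :=
        Real.continuousAt_rpow_const _ _ (Or.inr hc1'.le)
      exact hr.comp hadd
    have h3 : ContinuousAt (fun ε : ℝ =>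
        (f 0 + ε) ^ (1 - c) * (t + 1) ^ (a * (1 - c))
        + b * (1 - c) / (1 - (2 * c + a * (1 - c)))
          * ((t + 1) ^ (1 - 2 * c) - (t + 1) ^ (a * (1 - c)))) 0 :=
      (h2.mul continuousAt_const).add continuousAt_const
    have := h3.continuousWithinAt (s := Set.Ioi 0)
    simpa using this.tendsto
  refine ge_of_tendsto hcont ?_
  filter_upwards [self_mem_nhdsWithin] with ε hε
  exact key ε hε
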